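/- Let n, m be integers with 0 ≤ n < m. Then ∑_{a=0}^m [m,a]_q · (q^n z)^a q^{a(a−1)} / ( (z^{−1} q^{2−2m})_{m−a} · (q^n z)_a ) = 0 in the field ℚ(q,z); that is, the sl_2 fermionic sum X^{(0,n)}_m(q,z) vanishes whenever the corner angle n is a non-negative integer and m > n. -/

import Mathlib

/- STATEMENT 6: vanishing of the sl_2 fermionic sum X^{(0,n)}_m(q,z) for
   integers 0 ≤ n < m:
   ∑_{a=0}^m [m,a]_q (q^n z)^a q^{a(a−1)} / ((z⁻¹q^{2−2m})_{m−a} (q^n z)_a) = 0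
   in the field ℚ(q,z). -/

noncomputable section

open scoped BigOperators

/-- The field ℚ(q,z). -/
abbrev F6 : Type := FractionRing (MvPolynomial (Fin 2) ℚ)

def q6 : F6 := algebraMap (MvPolynomial (Fin 2) ℚ) F6 (MvPolynomial.X 0)
def z6 : F6 := algebraMap (MvPolynomial (Fin 2) ℚ) F6 (MvPolynomial.X 1)

/-- `(x)_n = ∏_{i=1}^n (1 - q^{i-1} x)` -/
def poch6 (x : F6) (n : ℕ) : F6 := ∏ i ∈ Finset.range n, (1 - q6 ^ i * x)

/-- `(q)_n = ∏_{k=1}^n (1 - q^k)` -/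
def qp6 (n : ℕ) : F6 := ∏ k ∈ Finset.range n, (1 - q6 ^ (k + 1))

/-- q-binomial coefficient `[m,a]_q = (q)_m / ((q)_a (q)_{m-a})` -/
def qbinom6 (m a : ℕ) : F6 := qp6 m / (qp6 a * qp6 (m - a))

/-
Multiplying the sum by `(q^n z)_m (z⁻¹ q^{2-2m})_m` clears all denominators. Reversing the
order of the factors of `(q^{m-a} z⁻¹ q^{2-2m})_a` then turns the `a`-th term into
`[m,a]_q q^{a(a-1)/2} (-v)^a (w)_a (q^a v w)_{m-a}` with `w = q^{m-1} z` and `v = q^{n+1-m}`.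
By the q-Chu–Vandermonde identity, proved by induction on `m` through q-Pascal, these terms
add up to `(v)_m`, which vanishes because `n < m` makes its factor `1 - q^{m-1-n} v` zero.
The multiplier is nonzero since in `ℚ(q,z)` the element `q` is not a root of unity and
`z` is not a power of `q`.
-/

open Finset

section CommRing

variable {R : Type*} [CommRing R] (q : R)

def qPoch (x : R) (n : ℕ) : R := ∏ i ∈ range n, (1 - q ^ i * x)

@[simp] lemma qPoch_zero (x : R) : qPoch q x 0 = 1 := prod_range_zero _

lemma qPoch_succ (x : R) (n : ℕ) : qPoch q x (n + 1) = qPoch q x n * (1 - q ^ n * x) :=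
  prod_range_succ _ _

lemma qPoch_succ' (x : R) (n : ℕ) : qPoch q x (n + 1) = (1 - x) * qPoch q (q * x) n := by
  rw [qPoch, qPoch, prod_range_succ', pow_zero, one_mul, mul_comm]
  exact congrArg (_ * ·) (prod_congr rfl fun i _ => by ring)

lemma qPoch_add (x : R) (a k : ℕ) :
    qPoch q x (a + k) = qPoch q x a * qPoch q (q ^ a * x) k := by
  rw [qPoch, qPoch, qPoch, prod_range_add]
  exact congrArg (_ * ·) (prod_congr rfl fun i _ => by ring)

lemma qPoch_eq_zero {x : R} {k n : ℕ} (hk : k < n) (h : q ^ k * x = 1) : qPoch q x n = 0 :=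
  prod_eq_zero (mem_range.mpr hk) (by rw [h, sub_self])

lemma qPoch_ne_zero [IsDomain R] {x : R} {n : ℕ} (h : ∀ i < n, q ^ i * x ≠ 1) :
    qPoch q x n ≠ 0 :=
  prod_ne_zero_iff.mpr fun i hi => sub_ne_zero.mpr (h i (mem_range.mp hi)).symm

def gaussBinom : ℕ → ℕ → R
  | _, 0 => 1
  | 0, _ + 1 => 0
  | m + 1, a + 1 => gaussBinom m (a + 1) + q ^ (m - a) * gaussBinom m a

@[simp] lemma gaussBinom_zero_right (m : ℕ) : gaussBinom q m 0 = 1 := by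
  cases m <;> rfl

lemma gaussBinom_succ_succ (m a : ℕ) :
    gaussBinom q (m + 1) (a + 1) = gaussBinom q m (a + 1) + q ^ (m - a) * gaussBinom q m a :=
  rfl

lemma gaussBinom_eq_zero_of_lt {m a : ℕ} (h : m < a) : gaussBinom q m a = 0 := by
  induction m generalizing a with
  | zero => obtain ⟨a, rfl⟩ := Nat.exists_eq_succ_of_ne_zero h.ne'; rfl
  | succ m ih =>
    obtain ⟨a, rfl⟩ := Nat.exists_eq_succ_of_ne_zero (Nat.ne_zero_of_lt h)
    rw [gaussBinom_succ_succ, ih (by omega), ih (by omega), mul_zero, add_zero]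

lemma gaussBinom_mul_qPoch_mul_qPoch {m a : ℕ} (h : a ≤ m) :
    gaussBinom q m a * (qPoch q q a * qPoch q q (m - a)) = qPoch q q m := by
  induction m generalizing a with
  | zero => obtain rfl := Nat.le_zero.mp h; simp
  | succ m ih =>
    rcases a with _ | b
    · simp
    rw [gaussBinom_succ_succ, Nat.add_sub_add_right, qPoch_succ q q m]
    rcases (Nat.lt_or_eq_of_le (Nat.le_of_succ_le_succ h)) with hb | rfl
    · obtain ⟨k, rfl⟩ := Nat.exists_eq_add_of_lt hb
      have h₁ := ih (a := b + 1) (by omega)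
      have h₂ := ih (a := b) (by omega)
      rw [show b + k + 1 - (b + 1) = k by omega] at h₁
      rw [show b + k + 1 - b = k + 1 by omega, qPoch_succ q q k] at h₂ ⊢
      rw [qPoch_succ q q b] at h₁ ⊢
      linear_combination (1 - q ^ k * q) * h₁ + q ^ (k + 1) * (1 - q ^ b * q) * h₂
    · rw [gaussBinom_eq_zero_of_lt q (Nat.lt_succ_self b), Nat.sub_self, pow_zero,
        qPoch_succ q q b]
      have := ih (a := b) le_rfl
      rw [Nat.sub_self] at this
      linear_combination (1 - q ^ b * q) * this

lemma sum_range_gaussBinom_succ (m : ℕ) (f : ℕ → R) :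
    ∑ a ∈ range (m + 2), gaussBinom q (m + 1) a * f a =
      ∑ a ∈ range (m + 1), gaussBinom q m a * f a +
        ∑ a ∈ range (m + 1), q ^ (m - a) * gaussBinom q m a * f (a + 1) := by
  rw [sum_range_succ', sum_range_succ' (fun a => gaussBinom q m a * f a)]
  simp only [gaussBinom_succ_succ, gaussBinom_zero_right, add_mul, sum_add_distrib]
  rw [sum_range_succ (fun a => gaussBinom q m (a + 1) * f (a + 1)),
    gaussBinom_eq_zero_of_lt q (Nat.lt_succ_self m)]
  ring

def chuTerm (v w : R) (m a : ℕ) : R :=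
  q ^ a.choose 2 * (-v) ^ a * qPoch q w a * qPoch q (q ^ a * v * w) (m - a)

lemma chuTerm_succ_of_le (v w : R) {m a : ℕ} (h : a ≤ m) :
    chuTerm q v w (m + 1) a = (1 - q ^ m * v * w) * chuTerm q v w m a := by
  have hpow : q ^ (m - a) * q ^ a = q ^ m := by rw [← pow_add, Nat.sub_add_cancel h]
  rw [chuTerm, chuTerm, Nat.sub_add_comm h, qPoch_succ]
  linear_combination
    (-(q ^ a.choose 2 * (-v) ^ a * qPoch q w a * qPoch q (q ^ a * v * w) (m - a) * v * w)) * hpow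

lemma chuTerm_succ_succ (v w : R) (m a : ℕ) :
    chuTerm q v w (m + 1) (a + 1) = -(q ^ a * v * (1 - w)) * chuTerm q v (q * w) m a := by
  rw [chuTerm, chuTerm, Nat.add_sub_add_right, Nat.choose_succ_succ', Nat.choose_one_right,
    qPoch_succ', show q ^ (a + 1) * v * w = q ^ a * v * (q * w) by ring]
  ring

-- The q-Chu–Vandermonde identity.
theorem sum_gaussBinom_mul_chuTerm (v w : R) (m : ℕ) :
    ∑ a ∈ range (m + 1), gaussBinom q m a * chuTerm q v w m a = qPoch q v m := by
  induction m generalizing w with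
  | zero => simp [chuTerm]
  | succ m ih =>
    have hfirst : ∑ a ∈ range (m + 1), gaussBinom q m a * chuTerm q v w (m + 1) a =
        (1 - q ^ m * v * w) * qPoch q v m := by
      rw [← ih w, mul_sum]
      refine sum_congr rfl fun a ha => ?_
      rw [chuTerm_succ_of_le q v w (Nat.lt_succ_iff.mp (mem_range.mp ha))]
      ring
    have hsecond : ∑ a ∈ range (m + 1),
        q ^ (m - a) * gaussBinom q m a * chuTerm q v w (m + 1) (a + 1) =
          -(q ^ m * v * (1 - w)) * qPoch q v m := by
      rw [← ih (q * w), mul_sum]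
      refine sum_congr rfl fun a ha => ?_
      have hpow : q ^ (m - a) * q ^ a = q ^ m := by
        rw [← pow_add, Nat.sub_add_cancel (Nat.lt_succ_iff.mp (mem_range.mp ha))]
      rw [chuTerm_succ_succ]
      linear_combination (-(gaussBinom q m a * v * (1 - w) * chuTerm q v (q * w) m a)) * hpow
    rw [sum_range_gaussBinom_succ, hfirst, hsecond, qPoch_succ]
    ring

end CommRing

section Field

variable {K : Type*} [Field K] {q : K}

-- The hypothesis says `x y = q^(1-a)`, written without negative powers.
lemma qPoch_reflect (hq : q ≠ 0) {x y : K} {a : ℕ} (h : q ^ a * x * y = q) :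
    qPoch q x a = q ^ a.choose 2 * (-x) ^ a * qPoch q y a := by
  have hfactor : ∀ i ∈ range a, 1 - q ^ i * x = (-x * q ^ i) * (1 - q ^ (a - 1 - i) * y) := by
    intro i hi
    have hi := mem_range.mp hi
    have hsplit : q ^ a = q * q ^ (a - 1) := by rw [← pow_succ']; congr 1; omega
    have hxy : q ^ (a - 1) * x * y = 1 :=
      mul_left_cancel₀ hq (by linear_combination h - x * y * hsplit)
    have hpow : q ^ i * q ^ (a - 1 - i) = q ^ (a - 1) := by rw [← pow_add]; congr 1; omega
    linear_combination (-(x * y)) * hpow - hxy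
  rw [qPoch, prod_congr rfl hfactor, prod_mul_distrib, prod_mul_distrib, prod_const, card_range,
    prod_pow_eq_pow_sum, sum_range_id, ← Nat.choose_two_right, qPoch,
    prod_range_reflect (fun j => 1 - q ^ j * y) a]
  ring

lemma div_mul_qPoch_eq_chuTerm (hq : q ≠ 0) {c Y w : K} {m a : ℕ} (ha : a ≤ m)
    (hYw : q ^ m * Y * w = q) (hc : qPoch q c a ≠ 0) (hY : qPoch q Y (m - a) ≠ 0) :
    c ^ a * q ^ (a * (a - 1)) / (qPoch q Y (m - a) * qPoch q c a) * (qPoch q c m * qPoch q Y m) =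
      chuTerm q (c / w) w m a := by
  have hw : w ≠ 0 := by
    rintro rfl
    exact hq (by simpa using hYw.symm)
  have hcm : qPoch q c m = qPoch q c a * qPoch q (q ^ a * c) (m - a) := by
    rw [← qPoch_add, Nat.add_sub_cancel' ha]
  have hYm : qPoch q Y m = qPoch q Y (m - a) * qPoch q (q ^ (m - a) * Y) a := by
    rw [← qPoch_add, Nat.sub_add_cancel ha]
  have hpow : q ^ a * q ^ (m - a) = q ^ m := by rw [← pow_add, Nat.add_sub_cancel' ha]
  have hrefl := qPoch_reflect hq (x := q ^ (m - a) * Y) (y := w) (a := a)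
    (by linear_combination Y * w * hpow + hYw)
  have hbase : c ^ a * q ^ (a * (a - 1)) * (-(q ^ (m - a) * Y)) ^ a = (-(c / w)) ^ a := by
    rcases a with _ | b
    · simp
    have hm : q ^ m = q * (q ^ b * q ^ (m - (b + 1))) := by
      rw [← pow_add, ← pow_succ']; congr 1; omega
    have hpow' : q ^ b * q ^ (m - (b + 1)) * Y * w = 1 :=
      mul_left_cancel₀ hq (by linear_combination hYw - Y * w * hm)
    rw [Nat.add_sub_cancel, mul_comm (b + 1) b, pow_mul, ← mul_pow, ← mul_pow]
    congr 1
    field_simp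
    linear_combination (-c) * hpow'
  rw [hcm, hYm, hrefl, chuTerm, mul_assoc _ (c / w), div_mul_cancel₀ c hw, ← hbase,
    div_mul_eq_mul_div, div_eq_iff (mul_ne_zero hY hc)]
  ring

end Field

lemma poch6_eq_qPoch : poch6 = qPoch q6 := rfl

lemma qp6_eq_qPoch (n : ℕ) : qp6 n = qPoch q6 q6 n :=
  prod_congr rfl fun k _ => by rw [pow_succ]

lemma q6_ne_zero : q6 ≠ 0 :=
  (map_ne_zero_iff _ (IsFractionRing.injective _ _)).mpr (MvPolynomial.X_ne_zero 0)

lemma z6_ne_zero : z6 ≠ 0 :=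
  (map_ne_zero_iff _ (IsFractionRing.injective _ _)).mpr (MvPolynomial.X_ne_zero 1)

lemma q6_pow_ne_one {k : ℕ} (hk : k ≠ 0) : q6 ^ k ≠ 1 := by
  rw [q6, ← map_pow, ← map_one (algebraMap (MvPolynomial (Fin 2) ℚ) F6),
    (IsFractionRing.injective _ _).ne_iff]
  intro h
  simpa [hk] using congrArg (MvPolynomial.eval 0) h

lemma z6_mul_q6_pow_ne_q6_pow (a b : ℕ) : z6 * q6 ^ b ≠ q6 ^ a := by
  rw [z6, q6, ← map_pow, ← map_pow, ← map_mul, (IsFractionRing.injective _ _).ne_iff]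
  intro h
  simpa using congrArg (MvPolynomial.eval ![1, 2]) h

lemma qbinom6_eq_gaussBinom {m a : ℕ} (h : a ≤ m) : qbinom6 m a = gaussBinom q6 m a := by
  have hne (k : ℕ) : qPoch q6 q6 k ≠ 0 :=
    qPoch_ne_zero q6 fun i _ => by rw [← pow_succ]; exact q6_pow_ne_one i.succ_ne_zero
  rw [qbinom6, qp6_eq_qPoch, qp6_eq_qPoch, qp6_eq_qPoch, eq_comm,
    eq_div_iff (mul_ne_zero (hne a) (hne _)), gaussBinom_mul_qPoch_mul_qPoch q6 h]

lemma qPoch_q6_pow_mul_z6_ne_zero (n k : ℕ) : qPoch q6 (q6 ^ n * z6) k ≠ 0 :=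
  qPoch_ne_zero q6 fun i _ h => z6_mul_q6_pow_ne_q6_pow 0 (i + n) (by rw [pow_zero, ← h]; ring)

lemma q6_pow_mul_z6_inv_mul_zpow_mul_eq {m : ℕ} (hm : 1 ≤ m) :
    q6 ^ m * (z6⁻¹ * q6 ^ (2 - 2 * (m : ℤ))) * (q6 ^ (m - 1) * z6) = q6 := by
  calc _ = q6 ^ (((m + (m - 1) : ℕ) : ℤ) + (2 - 2 * (m : ℤ))) * (z6⁻¹ * z6) := by
        rw [zpow_add₀ q6_ne_zero, zpow_natCast, pow_add]; ring
    _ = q6 := by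
        rw [inv_mul_cancel₀ z6_ne_zero,
          show ((m + (m - 1) : ℕ) : ℤ) + (2 - 2 * (m : ℤ)) = 1 by omega]
        simp

lemma qPoch_q6_ne_zero_of_mul_eq {m : ℕ} {Y : F6}
    (hY : q6 ^ m * Y * (q6 ^ (m - 1) * z6) = q6) (k : ℕ) : qPoch q6 Y k ≠ 0 :=
  qPoch_ne_zero q6 fun i _ h => z6_mul_q6_pow_ne_q6_pow (i + 1) (m + (m - 1)) (by
    rw [pow_add, pow_succ]
    linear_combination (-(z6 * q6 ^ m * q6 ^ (m - 1))) * h + q6 ^ i * hY)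

theorem stmt_6 (n m : ℕ) (hnm : n < m) :
    ∑ a ∈ Finset.range (m + 1),
      qbinom6 m a * (q6 ^ n * z6) ^ a * q6 ^ (a * (a - 1)) /
        (poch6 (z6⁻¹ * q6 ^ (2 - 2 * (m : ℤ))) (m - a) * poch6 (q6 ^ n * z6) a)
    = 0 := by
  rw [poch6_eq_qPoch]
  set c := q6 ^ n * z6
  set Y := z6⁻¹ * q6 ^ (2 - 2 * (m : ℤ))
  set w := q6 ^ (m - 1) * z6
  have hYw : q6 ^ m * Y * w = q6 := q6_pow_mul_z6_inv_mul_zpow_mul_eq (by omega)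
  have hY := qPoch_q6_ne_zero_of_mul_eq hYw
  have hc := qPoch_q6_pow_mul_z6_ne_zero n
  have hv : qPoch q6 (c / w) m = 0 := by
    refine qPoch_eq_zero q6 (k := m - 1 - n) (by omega) ?_
    rw [mul_div_assoc', div_eq_one_iff_eq (mul_ne_zero (pow_ne_zero _ q6_ne_zero) z6_ne_zero),
      ← mul_assoc, ← pow_add, Nat.sub_add_cancel (by omega)]
  refine (mul_eq_zero.mp ?_).resolve_right (mul_ne_zero (hc m) (hY m))
  rw [sum_mul, ← hv, ← sum_gaussBinom_mul_chuTerm q6 (c / w) w m]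
  refine sum_congr rfl fun a hmem => ?_
  have ha : a ≤ m := Nat.lt_succ_iff.mp (mem_range.mp hmem)
  rw [qbinom6_eq_gaussBinom ha, ← div_mul_qPoch_eq_chuTerm q6_ne_zero ha hYw (hc a) (hY _)]
  ring

end
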